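/- arXiv:1506.02000 — 5 statements merged into one kernel-verified Lean document; each statement's English description precedes it below -/
import Mathlib

section
/- Let X be a real m×n matrix, C₊ = [[-I, X],[0, I]], C₋ = [[I, 0],[-Xᵀ, -I]], and C = C₊C₋. If λ is a real eigenvalue of C with λ ≠ 0, then 2 + λ + λ⁻¹ ≤ 0. -/
/-!
The second factor of the Coxeter transformation is minus the transpose of the first,
`C₋ = -C₊ᵀ`, so `C = -(C₊ C₊ᵀ)` is negative semidefinite. A nonzero real eigenvalue `λ` of `C`
is therefore negative, and `2 + λ + λ⁻¹ = (1 + λ)² / λ ≤ 0`.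
-/

open Matrix

open scoped ComplexOrder in
theorem Matrix.PosSemidef.nonpos_of_mem_spectrum_neg {𝕜 n : Type*} [RCLike 𝕜] [Fintype n]
    [DecidableEq n] {A : Matrix n n 𝕜} (hA : A.PosSemidef) {a : 𝕜} (ha : a ∈ spectrum 𝕜 (-A)) :
    a ≤ 0 := by
  rw [← spectrum.neg_eq, Set.mem_neg] at ha
  simpa using (posSemidef_iff_isHermitian_and_spectrum_nonneg.mp hA).2 ha

theorem Matrix.neg_transpose_fromBlocks_neg_one {R m n : Type*} [Ring R] [DecidableEq m]
    [DecidableEq n] (X : Matrix m n R) :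
    -(fromBlocks (-1 : Matrix m m R) X 0 (1 : Matrix n n R))ᵀ =
      fromBlocks (1 : Matrix m m R) 0 (-Xᵀ) (-1) := by
  simp [fromBlocks_transpose, fromBlocks_neg]

theorem two_add_add_inv_nonpos {x : ℝ} (hx : x < 0) : 2 + x + x⁻¹ ≤ 0 := by
  have hform : 2 + x + x⁻¹ = (1 + x) ^ 2 / x := by
    field_simp [hx.ne]
    ring
  rw [hform]
  exact div_nonpos_of_nonneg_of_nonpos (sq_nonneg _) hx.le

theorem coxeter_eigenvalue_ineq (m n : ℕ) (X : Matrix (Fin m) (Fin n) ℝ)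
    (C : Matrix (Fin m ⊕ Fin n) (Fin m ⊕ Fin n) ℝ)
    (hC : C = Matrix.fromBlocks (-1 : Matrix (Fin m) (Fin m) ℝ) X 0 1 *
      Matrix.fromBlocks (1 : Matrix (Fin m) (Fin m) ℝ) 0 (-Xᵀ) (-1))
    (lam : ℝ) (hlam : lam ∈ spectrum ℝ C) (hne : lam ≠ 0) :
    2 + lam + lam⁻¹ ≤ 0 := by
  set P := fromBlocks (-1 : Matrix (Fin m) (Fin m) ℝ) X 0 (1 : Matrix (Fin n) (Fin n) ℝ)
  have hCP : C = -(P * Pᴴ) := by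
    rw [hC, ← neg_transpose_fromBlocks_neg_one, mul_neg, conjTranspose_eq_transpose_of_trivial]
  rw [hCP] at hlam
  have hlam_nonpos := (posSemidef_self_mul_conjTranspose P).nonpos_of_mem_spectrum_neg hlam
  exact two_add_add_inv_nonpos (lt_of_le_of_ne hlam_nonpos hne)
end

section
/- Let X be a real m×n matrix, C₊ = [[-I, X],[0, I]], C₋ = [[I, 0],[-Xᵀ, -I]], and C = C₊C₋. Then every eigenvalue of C is real and strictly negative. -/
/-!
Write `C₊ = [[-1, X], [0, 1]]`. Then `C₊` is an involution and `C₋ = -C₊ᵀ`, so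
`C = -(C₊ C₊ᵀ)`. Since `C₊` is invertible, `C₊ C₊ᵀ` is positive definite, hence its spectrum
consists of positive reals, and the spectrum of `C` of negative reals.
-/

open Matrix
open scoped ComplexOrder

namespace Matrix

variable {m n R : Type*} [DecidableEq m] [DecidableEq n]

lemma fromBlocks_neg_one_zero_one_mul_self [Fintype m] [Fintype n] [Ring R] (X : Matrix m n R) :
    fromBlocks (-1 : Matrix m m R) X 0 (1 : Matrix n n R) *
      fromBlocks (-1 : Matrix m m R) X 0 (1 : Matrix n n R) = 1 := by
  simp [fromBlocks_multiply, ← fromBlocks_one]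

lemma fromBlocks_one_zero_neg_one_eq_neg_transpose [Ring R] (X : Matrix m n R) :
    fromBlocks (1 : Matrix m m R) 0 (-Xᵀ) (-1 : Matrix n n R) =
      -(fromBlocks (-1 : Matrix m m R) X 0 (1 : Matrix n n R))ᵀ := by
  simp [fromBlocks_transpose, fromBlocks_neg]

lemma PosDef.pos_of_mem_spectrum [Fintype n] {𝕜 : Type*} [RCLike 𝕜] {P : Matrix n n 𝕜}
    (hP : P.PosDef) {z : 𝕜} (hz : z ∈ spectrum 𝕜 P) : 0 < z := by
  obtain ⟨_, ⟨i, rfl⟩, rfl⟩ := hP.isHermitian.spectrum_eq_image_range ▸ hz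
  exact RCLike.ofReal_pos.mpr (hP.eigenvalues_pos i)

end Matrix

theorem coxeter_eigenvalues_real_negative (m n : ℕ) (X : Matrix (Fin m) (Fin n) ℝ)
    (C : Matrix (Fin m ⊕ Fin n) (Fin m ⊕ Fin n) ℝ)
    (hC : C = Matrix.fromBlocks (-1 : Matrix (Fin m) (Fin m) ℝ) X 0 1 *
      Matrix.fromBlocks (1 : Matrix (Fin m) (Fin m) ℝ) 0 (-Xᵀ) (-1)) :
    ∀ z ∈ spectrum ℂ (C.map (algebraMap ℝ ℂ)), z.im = 0 ∧ z.re < 0 := by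
  intro z hz
  set Cplus := fromBlocks (-1 : Matrix (Fin m) (Fin m) ℝ) X 0 (1 : Matrix (Fin n) (Fin n) ℝ)
  set B := (algebraMap ℝ ℂ).mapMatrix Cplus
  have hB : IsUnit B :=
    (IsUnit.of_mul_eq_one _ (fromBlocks_neg_one_zero_one_mul_self X)).map _
  have hCB : C.map (algebraMap ℝ ℂ) = -(B * Bᴴ) := by
    rw [hC, fromBlocks_one_zero_neg_one_eq_neg_transpose, mul_neg,
      ← conjTranspose_eq_transpose_of_trivial, Matrix.map_neg _ (map_neg _), Matrix.map_mul,
      conjTranspose_map (algebraMap ℝ ℂ) fun x ↦ by simp]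
    rfl
  rw [hCB, ← spectrum.neg_eq, Set.mem_neg] at hz
  have hpos : 0 < -z :=
    (PosDef.mul_conjTranspose_self B (vecMul_injective_iff_isUnit.mpr hB)).pos_of_mem_spectrum hz
  obtain ⟨hre, him⟩ := Complex.pos_iff.mp hpos
  exact ⟨by simpa using him, by simpa using hre⟩
end

section
/- Let X be a real m×n matrix, C₊ = [[-I, X],[0, I]], C₋ = [[I, 0],[-Xᵀ, -I]], and C = C₊C₋. Then every eigenvalue of -C (equivalently, every root of the characteristic polynomial of -C) is real and strictly positive. -/
/-!
With `M = [[I, X], [0, I]]` one has `C₊ C₋ = -(M Mᵀ)`, so `-C = M Mᵀ`. Since `M` is unipotent,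
hence invertible, `M Mᵀ` is positive definite, and the spectrum of a positive definite matrix
consists of positive reals.
-/

open Matrix
open scoped ComplexOrder

namespace Matrix

variable {l m : Type*} [Fintype l] [Fintype m] [DecidableEq l] [DecidableEq m]

theorem fromBlocks_neg_one_mul_fromBlocks_eq_neg_mul_transpose {R : Type*} [Ring R]
    (X : Matrix l m R) :
    fromBlocks (-1) X 0 1 * fromBlocks 1 0 (-Xᵀ) (-1) =
      -(fromBlocks 1 X 0 1 * (fromBlocks 1 X 0 1)ᵀ) := by
  simp only [fromBlocks_transpose, fromBlocks_multiply, fromBlocks_neg]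
  congr 1 <;> simp [add_comm]

theorem isUnit_fromBlocks_one_zero_one {R : Type*} [CommRing R] (X : Matrix l m R) :
    IsUnit (fromBlocks (1 : Matrix l l R) X 0 (1 : Matrix m m R)) := by
  simp [isUnit_iff_isUnit_det]

theorem PosDef.mul_conjTranspose_self_of_isUnit {K : Type*} [Field K] [PartialOrder K]
    [StarRing K] [StarOrderedRing K] {A : Matrix m m K} (hA : IsUnit A) : (A * Aᴴ).PosDef :=
  .mul_conjTranspose_self A (vecMul_injective_iff_isUnit.mpr hA)

theorem PosDef.re_pos_of_mem_spectrum {𝕜 : Type*} [RCLike 𝕜] {A : Matrix m m 𝕜} (hA : A.PosDef)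
    {z : 𝕜} (hz : z ∈ spectrum 𝕜 A) : RCLike.im z = 0 ∧ 0 < RCLike.re z := by
  rw [hA.isHermitian.spectrum_eq_image_range] at hz
  obtain ⟨_, ⟨i, rfl⟩, rfl⟩ := hz
  exact ⟨RCLike.ofReal_im _, by simpa using hA.eigenvalues_pos i⟩

end Matrix

theorem neg_coxeter_eigenvalues_real_positive (m n : ℕ) (X : Matrix (Fin m) (Fin n) ℝ)
    (C : Matrix (Fin m ⊕ Fin n) (Fin m ⊕ Fin n) ℝ)
    (hC : C = Matrix.fromBlocks (-1 : Matrix (Fin m) (Fin m) ℝ) X 0 1 *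
      Matrix.fromBlocks (1 : Matrix (Fin m) (Fin m) ℝ) 0 (-Xᵀ) (-1)) :
    ∀ z ∈ spectrum ℂ ((-C).map (algebraMap ℝ ℂ)), z.im = 0 ∧ 0 < z.re := by
  set N := (fromBlocks (1 : Matrix (Fin m) (Fin m) ℝ) X 0 (1 : Matrix (Fin n) (Fin n) ℝ)).map
    (algebraMap ℝ ℂ)
  have hN : (-C).map (algebraMap ℝ ℂ) = N * Nᴴ := by
    rw [hC, fromBlocks_neg_one_mul_fromBlocks_eq_neg_mul_transpose, neg_neg, Matrix.map_mul,
      ← conjTranspose_eq_transpose_of_trivial, conjTranspose_map _ (fun _ => by simp)]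
  have hNunit : IsUnit N := (isUnit_fromBlocks_one_zero_one X).map (algebraMap ℝ ℂ).mapMatrix
  intro z hz
  rw [hN] at hz
  exact (PosDef.mul_conjTranspose_self_of_isUnit hNunit).re_pos_of_mem_spectrum hz
end

section
/- Let X be a real m×n matrix with at least one nonzero entry, and C = C₊C₋ the associated bipartite Coxeter transformation with C₊ = [[-I, X],[0, I]], C₋ = [[I, 0],[-Xᵀ, -I]]. Then the spectral radius of C is at least (3+√5)/2. -/
/-!
In block form `C = [[-1 - X Xᵀ, -X], [-Xᵀ, -1]]`, so an eigenvector `v` of `X Xᵀ` with eigenvalue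
`μ ≠ 0` lifts to the eigenvector `(-(1 + ν) v, Xᵀ v)` of `C` for each root `ν` of
`ν² + (2 + μ) ν + 1`. Since `X` has an entry `1`, the Gram matrix `X Xᵀ` has a diagonal entry
`≥ 1`, hence an eigenvalue `μ ≥ 1`; the larger root in absolute value is then at least the one
for `μ = 1`, namely `(3 + √5) / 2`.
-/

open Matrix

theorem Matrix.mem_spectrum_of_mulVec_eq_smul {n K : Type*} [Fintype n] [DecidableEq n] [Field K]
    {A : Matrix n n K} {μ : K} {v : n → K} (hv : v ≠ 0) (hAv : A *ᵥ v = μ • v) :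
    μ ∈ spectrum K A := by
  rw [← spectrum_toLin']
  exact (Module.End.hasEigenvalue_of_hasEigenvector
    (Module.End.hasEigenvector_iff.mpr ⟨Module.End.mem_eigenspace_iff.mpr hAv, hv⟩)).mem_spectrum

theorem Matrix.IsHermitian.exists_diag_le_eigenvalues {n : Type*} [Fintype n] [DecidableEq n]
    {A : Matrix n n ℝ} (hA : A.IsHermitian) (i : n) : ∃ k, A i i ≤ hA.eigenvalues k := by
  -- `A i i` is a convex combination of the eigenvalues, weighted by the squares of the `i`-th
  -- row of the orthogonal matrix of eigenvectors.
  have hrow : ∑ k, hA.eigenvectorBasis k i ^ 2 = 1 := by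
    simpa [mul_apply, one_apply, sq] using
      congrFun (congrFun (mem_unitaryGroup_iff.mp hA.eigenvectorUnitary.2) i) i
  have hdiag : A i i = ∑ k, hA.eigenvalues k * hA.eigenvectorBasis k i ^ 2 := by
    conv_lhs => rw [hA.spectral_theorem, Unitary.conjStarAlgAut_apply, mul_apply]
    simp only [mul_diagonal]
    refine Finset.sum_congr rfl fun k _ => ?_
    simp only [eigenvectorUnitary_apply, RCLike.ofReal_real_eq_id, Function.comp_apply, id_eq,
      star_apply, star_trivial]
    ring
  obtain ⟨k, -, hk⟩ := Finset.exists_max_image Finset.univ hA.eigenvalues ⟨i, Finset.mem_univ i⟩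
  refine ⟨k, ?_⟩
  calc A i i = ∑ l, hA.eigenvalues l * hA.eigenvectorBasis l i ^ 2 := hdiag
    _ ≤ ∑ l, hA.eigenvalues k * hA.eigenvectorBasis l i ^ 2 :=
      Finset.sum_le_sum fun l hl => mul_le_mul_of_nonneg_right (hk l hl) (sq_nonneg _)
    _ = hA.eigenvalues k := by rw [← Finset.mul_sum, hrow, mul_one]

theorem Matrix.IsHermitian.eigenvectorBasis_ne_zero {n : Type*} [Fintype n] [DecidableEq n]
    {A : Matrix n n ℝ} (hA : A.IsHermitian) (k : n) : (⇑(hA.eigenvectorBasis k) : n → ℝ) ≠ 0 := by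
  simpa using hA.eigenvectorBasis.orthonormal.ne_zero k

section BipartiteCoxeter

variable {m n R : Type*} [Fintype m] [Fintype n] [DecidableEq m] [DecidableEq n]

def bipartiteCoxeter [Ring R] (X : Matrix m n R) : Matrix (m ⊕ n) (m ⊕ n) R :=
  fromBlocks (-1) X 0 1 * fromBlocks 1 0 (-Xᵀ) (-1)

theorem bipartiteCoxeter_eq_fromBlocks [Ring R] (X : Matrix m n R) :
    bipartiteCoxeter X = fromBlocks (-1 - X * Xᵀ) (-X) (-Xᵀ) (-1) := by
  rw [bipartiteCoxeter, fromBlocks_multiply]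
  congr 1 <;> simp [sub_eq_add_neg]

theorem bipartiteCoxeter_mulVec [CommRing R] {X : Matrix m n R} {μ ν : R} {v : m → R}
    (hv : (X * Xᵀ) *ᵥ v = μ • v) (hν : ν ^ 2 + (2 + μ) * ν + 1 = 0) :
    bipartiteCoxeter X *ᵥ Sum.elim (-(1 + ν) • v) (Xᵀ *ᵥ v) =
      ν • Sum.elim (-(1 + ν) • v) (Xᵀ *ᵥ v) := by
  have top : (-1 - X * Xᵀ) *ᵥ (-(1 + ν) • v) + -X *ᵥ (Xᵀ *ᵥ v) = ν • (-(1 + ν) • v) := by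
    simp only [sub_mulVec, neg_mulVec, Matrix.neg_mul, mulVec_smul, one_mulVec, mulVec_mulVec, hv]
    linear_combination (norm := module) hν • v
  have bot : -Xᵀ *ᵥ (-(1 + ν) • v) + -1 *ᵥ (Xᵀ *ᵥ v) = ν • Xᵀ *ᵥ v := by
    rw [neg_mulVec, neg_mulVec, mulVec_smul, one_mulVec]
    module
  rw [bipartiteCoxeter_eq_fromBlocks, fromBlocks_mulVec, Sum.elim_comp_inl, Sum.elim_comp_inr]
  ext (k | k)
  · exact congrFun top k
  · exact congrFun bot k

theorem mem_spectrum_bipartiteCoxeter [Field R] {X : Matrix m n R} {μ ν : R} {v : m → R}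
    (hv : (X * Xᵀ) *ᵥ v = μ • v) (hv0 : v ≠ 0) (hμ : μ ≠ 0)
    (hν : ν ^ 2 + (2 + μ) * ν + 1 = 0) : ν ∈ spectrum R (bipartiteCoxeter X) := by
  refine mem_spectrum_of_mulVec_eq_smul ?_ (bipartiteCoxeter_mulVec hv hν)
  have hXv : Xᵀ *ᵥ v ≠ 0 := fun h => by
    rw [← mulVec_mulVec, h, mulVec_zero, eq_comm, smul_eq_zero] at hv
    exact hv.elim hμ hv0
  exact fun h => hXv (by simpa using congrArg (· ∘ Sum.inr) h)

end BipartiteCoxeter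

theorem exists_root_abs_ge_three_add_sqrt_five_div_two {μ : ℝ} (hμ : 1 ≤ μ) :
    ∃ ν : ℝ, ν ^ 2 + (2 + μ) * ν + 1 = 0 ∧ (3 + Real.sqrt 5) / 2 ≤ |ν| := by
  have hs : Real.sqrt (μ ^ 2 + 4 * μ) ^ 2 = μ ^ 2 + 4 * μ := Real.sq_sqrt (by positivity)
  have h5 : Real.sqrt 5 ≤ Real.sqrt (μ ^ 2 + 4 * μ) := Real.sqrt_le_sqrt (by nlinarith)
  refine ⟨-((2 + μ) + Real.sqrt (μ ^ 2 + 4 * μ)) / 2, by linear_combination hs / 4, ?_⟩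
  rw [abs_of_neg (by nlinarith [Real.sqrt_nonneg (μ ^ 2 + 4 * μ)])]
  linarith

theorem coxeter_spectral_radius_lower_bound_general (m n : ℕ) (X : Matrix (Fin m) (Fin n) ℝ)
    (hX : ∃ i j, X i j = 1)
    (C : Matrix (Fin m ⊕ Fin n) (Fin m ⊕ Fin n) ℝ)
    (hC : C = Matrix.fromBlocks (-1 : Matrix (Fin m) (Fin m) ℝ) X 0 1 *
      Matrix.fromBlocks (1 : Matrix (Fin m) (Fin m) ℝ) 0 (-Xᵀ) (-1)) :
    ∃ lam ∈ spectrum ℝ C, (3 + Real.sqrt 5) / 2 ≤ |lam| := by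
  obtain ⟨i, j, hij⟩ := hX
  have hA : (X * Xᵀ).IsHermitian := isHermitian_mul_conjTranspose_self X
  have hdiag : 1 ≤ (X * Xᵀ) i i := by
    calc (1 : ℝ) = X i j * Xᵀ j i := by simp [hij]
      _ ≤ (X * Xᵀ) i i := Finset.single_le_sum (f := fun l => X i l * Xᵀ l i)
          (fun l _ => mul_self_nonneg (X i l)) (Finset.mem_univ j)
  obtain ⟨k, hk⟩ := hA.exists_diag_le_eigenvalues i
  obtain ⟨ν, hν, hbound⟩ := exists_root_abs_ge_three_add_sqrt_five_div_two (hdiag.trans hk)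
  refine ⟨ν, ?_, hbound⟩
  rw [hC]
  exact mem_spectrum_bipartiteCoxeter (hA.mulVec_eigenvectorBasis k)
    (hA.eigenvectorBasis_ne_zero k) (by linarith) hν

theorem coxeter_spectral_radius_lower_bound (m n : ℕ) (X : Matrix (Fin m) (Fin n) ℝ)
    (hX01 : ∀ i j, X i j = 0 ∨ X i j = 1)
    (hX : ∃ i j, X i j = 1)
    (C : Matrix (Fin m ⊕ Fin n) (Fin m ⊕ Fin n) ℝ)
    (hC : C = Matrix.fromBlocks (-1 : Matrix (Fin m) (Fin m) ℝ) X 0 1 *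
      Matrix.fromBlocks (1 : Matrix (Fin m) (Fin m) ℝ) 0 (-Xᵀ) (-1)) :
    ∃ lam ∈ spectrum ℝ C, (3 + Real.sqrt 5) / 2 ≤ |lam| :=
  coxeter_spectral_radius_lower_bound_general m n X hX C hC
end

section
/- Let X be a real m×n matrix and A = [[0, X],[Xᵀ, 0]]. If α is an eigenvalue of A, then -α² ≤ 0, and for every eigenvalue λ of C = C₊C₋ (with C₊ = [[-I,X],[0,I]], C₋ = [[I,0],[-Xᵀ,-I]]) there exists an eigenvalue α of A with λ² + (2 + α²)λ + 1 = 0. -/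
/-!
Multiplying out the blocks gives `(C + 1)² = -A²C`, so an eigenvector `v` of `C` for `λ` satisfies
`(λ + 1)² v = -λ A² v`. Hence `λ ≠ 0` and `μ = -(λ + 1)²/λ` is an eigenvalue of `A² = AᵀA`, so
`μ ≥ 0`. Writing `μ = α²`, the factorization `A² - α² = (A - α)(A + α)` shows that `α` or `-α`
lies in the spectrum of `A`, and `(λ + 1)² = -α²λ` is the required quadratic relation.
-/

open Matrix

theorem Matrix.mem_spectrum_iff_exists_mulVec_eq_smul {K ι : Type*} [Field K] [Fintype ι]
    [DecidableEq ι] {M : Matrix ι ι K} {μ : K} :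
    μ ∈ spectrum K M ↔ ∃ v, v ≠ 0 ∧ M *ᵥ v = μ • v := by
  rw [← spectrum_toLin', ← Module.End.hasEigenvalue_iff_mem_spectrum]
  constructor
  · intro h
    obtain ⟨v, hv⟩ := h.exists_hasEigenvector
    exact ⟨v, hv.2, hv.apply_eq_smul⟩
  · rintro ⟨v, hv, hMv⟩
    exact Module.End.hasEigenvalue_of_hasEigenvector
      ⟨by simpa [Module.End.mem_eigenspace_iff] using hMv, hv⟩

theorem spectrum.mem_or_neg_mem_of_sq_mem {R A : Type*} [CommRing R] [Ring A] [Algebra R A]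
    {a : A} {α : R} (h : α ^ 2 ∈ spectrum R (a ^ 2)) :
    α ∈ spectrum R a ∨ -α ∈ spectrum R a := by
  by_contra! hα
  obtain ⟨hpos, hneg⟩ := hα
  rw [spectrum.notMem_iff] at hpos hneg
  have hfac : algebraMap R A (α ^ 2) - a ^ 2 =
      -(algebraMap R A (-α) - a) * (algebraMap R A α - a) := by
    rw [map_pow, (Algebra.commute_algebraMap_left α a).sq_sub_sq, map_neg]
    noncomm_ring
  exact spectrum.mem_iff.mp h (hfac ▸ hneg.neg.mul hpos)

theorem Matrix.nonneg_of_mem_spectrum_transpose_mul_self {ι κ : Type*} [Fintype ι] [Fintype κ]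
    [DecidableEq κ] (M : Matrix ι κ ℝ) {μ : ℝ} (hμ : μ ∈ spectrum ℝ (Mᵀ * M)) : 0 ≤ μ := by
  have hM := posSemidef_conjTranspose_mul_self M
  rw [conjTranspose_eq_transpose_of_trivial] at hM
  rw [hM.isHermitian.spectrum_real_eq_range_eigenvalues] at hμ
  obtain ⟨i, rfl⟩ := hμ
  exact hM.eigenvalues_nonneg i

theorem Matrix.exists_mem_spectrum_of_add_one_sq_eq {K ι : Type*} [Field K] [Fintype ι]
    [DecidableEq ι] {B C : Matrix ι ι K} (h : (C + 1) ^ 2 = -(B * C)) {lam : K}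
    (hlam : lam ∈ spectrum K C) : ∃ μ ∈ spectrum K B, lam ^ 2 + (2 + μ) * lam + 1 = 0 := by
  obtain ⟨v, hv, hCv⟩ := mem_spectrum_iff_exists_mulVec_eq_smul.mp hlam
  have hBv : (lam + 1) ^ 2 • v = -lam • (B *ᵥ v) := by
    have h' := congrArg (· *ᵥ v) h
    simp only [sq, ← mulVec_mulVec, add_mulVec, one_mulVec, hCv, neg_mulVec, mulVec_smul,
      mulVec_add] at h'
    linear_combination (norm := module) h'
  have hlam0 : lam ≠ 0 := by
    rintro rfl
    exact hv (by simpa using hBv)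
  refine ⟨-(lam + 1) ^ 2 / lam, mem_spectrum_iff_exists_mulVec_eq_smul.mpr ⟨v, hv, ?_⟩,
    by field_simp; ring⟩
  rw [div_eq_inv_mul, mul_smul, neg_smul, hBv, neg_smul, neg_neg, smul_smul,
    inv_mul_cancel₀ hlam0, one_smul]

theorem Matrix.coxeter_add_one_sq {R ι κ : Type*} [Ring R] [Fintype ι] [Fintype κ]
    [DecidableEq ι] [DecidableEq κ] {X : Matrix ι κ R} {Y : Matrix κ ι R}
    {A C : Matrix (ι ⊕ κ) (ι ⊕ κ) R} (hA : A = fromBlocks 0 X Y 0)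
    (hC : C = fromBlocks (-1) X 0 1 * fromBlocks 1 0 (-Y) (-1)) :
    (C + 1) ^ 2 = -(A ^ 2 * C) := by
  subst hA hC
  simp only [sq, ← fromBlocks_one, fromBlocks_multiply, fromBlocks_add, fromBlocks_neg]
  congr 1 <;> simp [Matrix.mul_add, Matrix.mul_assoc]

theorem coxeter_adjacency_eigenvalue_correspondence (m n : ℕ)
    (X : Matrix (Fin m) (Fin n) ℝ)
    (A C : Matrix (Fin m ⊕ Fin n) (Fin m ⊕ Fin n) ℝ)
    (hA : A = Matrix.fromBlocks (0 : Matrix (Fin m) (Fin m) ℝ) X Xᵀ 0)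
    (hC : C = Matrix.fromBlocks (-1 : Matrix (Fin m) (Fin m) ℝ) X 0 1 *
      Matrix.fromBlocks (1 : Matrix (Fin m) (Fin m) ℝ) 0 (-Xᵀ) (-1)) :
    (∀ α ∈ spectrum ℝ A, -α ^ 2 ≤ 0) ∧
      ∀ lam ∈ spectrum ℝ C, ∃ α ∈ spectrum ℝ A,
        lam ^ 2 + (2 + α ^ 2) * lam + 1 = 0 := by
  refine ⟨fun α _ => neg_nonpos.mpr (sq_nonneg α), fun lam hlam => ?_⟩
  obtain ⟨μ, hμ, hpoly⟩ := exists_mem_spectrum_of_add_one_sq_eq (coxeter_add_one_sq hA hC) hlam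
  have hA_symm : Aᵀ = A := by simp [hA, fromBlocks_transpose]
  have hμ0 : 0 ≤ μ := nonneg_of_mem_spectrum_transpose_mul_self A (by rwa [hA_symm, ← sq])
  have hsq : √μ ^ 2 ∈ spectrum ℝ (A ^ 2) := by rwa [Real.sq_sqrt hμ0]
  rcases spectrum.mem_or_neg_mem_of_sq_mem hsq with hα | hα
  · exact ⟨_, hα, by rwa [Real.sq_sqrt hμ0]⟩
  · exact ⟨_, hα, by rwa [neg_sq, Real.sq_sqrt hμ0]⟩
end
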